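/- arXiv:2307.00835 — 5 statements merged into one kernel-verified Lean document; each statement's English description precedes it below -/
import Mathlib

section
/- Identifiability of nonlinear pre-additive noise models: Suppose g, g' : ℝ → ℝ are strictly monotone and twice differentiable, h, h' : [0,1] → ℝ are differentiable and strictly monotone with h(1/2) = h'(1/2) = 0, β, β' ∈ ℝ, and g(x + h(ε)) + βx = g'(x + h'(ε)) + β'x for all x in an open set X ⊆ ℝ and all ε ∈ [0,1]. If g'' ≠ 0 almost everywhere, then β = β', h = h' on [0,1], and g(x + h(ε)) = g'(x + h(ε)) for all x ∈ X and ε ∈ [0,1]. -/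
/-!
Write `c = h - h'`. Substituting `t = x + h' ε` turns the equation into
`g (t + c ε) = g' t + (β' - β) (t - h' ε)`, so for nearby `s, ε` the function
`t ↦ g (t + c s) - g (t + c ε)` is constant near a suitable `t₀`, whence
`deriv g (t₀ + c s) = deriv g (t₀ + c ε)`. If `c` were not locally constant, by continuity
`c s` would sweep an interval on which `deriv g` is constant, so `deriv (deriv g)` would vanish
on a set of positive measure.
Hence `c` is constant on the connected `[0,1]`, and `c (1/2) = 0`. Comparing `ε₀` with
`ε = 1/2` at the point `x + h ε₀` then gives `β h(ε₀) = β' h(ε₀)`, and `h(ε₀) ≠ 0`.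
-/

open Set MeasureTheory Filter Topology

theorem IsPreconnected.subsingleton_of_forall_eq_of_ae_deriv_ne_zero {f : ℝ → ℝ}
    (hf : ∀ᵐ x, deriv f x ≠ 0) {S : Set ℝ} (hS : IsPreconnected S) {C : ℝ}
    (hfS : ∀ x ∈ S, f x = C) : S.Subsingleton := by
  intro a ha b hb
  by_contra hab
  have hIoo : Ioo (min a b) (max a b) ⊆ S :=
    Ioo_subset_Icc_self.trans (hS.ordConnected.uIcc_subset ha hb)
  have hderiv : Ioo (min a b) (max a b) ⊆ {x | ¬deriv f x ≠ 0} := fun x hx => by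
    have hC : f =ᶠ[𝓝 x] fun _ => C :=
      eventually_of_mem (isOpen_Ioo.mem_nhds hx) fun y hy => hfS y (hIoo hy)
    simp [hC.deriv_eq]
  have hnull := measure_mono_null hderiv (ae_iff.mp hf)
  simp only [Real.volume_Ioo, ENNReal.ofReal_eq_zero, sub_nonpos, max_le_iff, le_min_iff] at hnull
  exact hab (le_antisymm hnull.2.1 hnull.1.2)

theorem deriv_add_eq_of_eventuallyEq_const {g : ℝ → ℝ} {t a b C : ℝ}
    (ha : DifferentiableAt ℝ g (t + a)) (hb : DifferentiableAt ℝ g (t + b))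
    (hC : (fun x => g (x + a) - g (x + b)) =ᶠ[𝓝 t] fun _ => C) :
    deriv g (t + a) = deriv g (t + b) := by
  have h := ((ha.hasDerivAt.comp_add_const t a).fun_sub (hb.hasDerivAt.comp_add_const t b)).deriv
  rw [hC.deriv_eq, deriv_const] at h
  linarith

def PreANMEq (g h : ℝ → ℝ) (β : ℝ) (g' h' : ℝ → ℝ) (β' : ℝ) (X : Set ℝ) : Prop :=
  ∀ x ∈ X, ∀ ε ∈ Icc (0 : ℝ) 1, g (x + h ε) + β * x = g' (x + h' ε) + β' * x

namespace PreANMEq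

variable {g g' h h' : ℝ → ℝ} {β β' : ℝ} {X : Set ℝ}

theorem shift (H : PreANMEq g h β g' h' β' X) {ε t : ℝ} (hε : ε ∈ Icc (0 : ℝ) 1)
    (ht : t - h' ε ∈ X) : g (t + (h ε - h' ε)) = g' t + (β' - β) * (t - h' ε) := by
  have := H _ ht ε hε
  rw [sub_add_cancel, show t - h' ε + h ε = t + (h ε - h' ε) by ring] at this
  linear_combination this

theorem deriv_eq (H : PreANMEq g h β g' h' β' X) (hX : IsOpen X) (hg : Differentiable ℝ g)
    {ε s t : ℝ} (hε : ε ∈ Icc (0 : ℝ) 1) (hs : s ∈ Icc (0 : ℝ) 1)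
    (hts : t - h' s ∈ X) (htε : t - h' ε ∈ X) :
    deriv g (t + (h s - h' s)) = deriv g (t + (h ε - h' ε)) := by
  refine deriv_add_eq_of_eventuallyEq_const (hg _) (hg _) (C := (β' - β) * (h' ε - h' s)) ?_
  have hU : IsOpen {x | x - h' s ∈ X ∧ x - h' ε ∈ X} :=
    (hX.preimage (continuous_sub_right _)).inter (hX.preimage (continuous_sub_right _))
  filter_upwards [hU.mem_nhds ⟨hts, htε⟩] with x ⟨hxs, hxε⟩
  rw [H.shift hs hxs, H.shift hε hxε]
  ring

theorem eventually_sub_eq (H : PreANMEq g h β g' h' β' X) (hX : IsOpen X) (hXne : X.Nonempty)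
    (hg : Differentiable ℝ g) (hg2 : ∀ᵐ x, deriv (deriv g) x ≠ 0)
    (hh : ContinuousOn h (Icc 0 1)) (hh' : ContinuousOn h' (Icc 0 1))
    {ε : ℝ} (hε : ε ∈ Icc (0 : ℝ) 1) :
    ∀ᶠ s in 𝓝[Icc 0 1] ε, h s - h' s = h ε - h' ε := by
  obtain ⟨x₀, hx₀⟩ := hXne
  set t := x₀ + h' ε
  have hnear : ∀ᶠ s in 𝓝[Icc 0 1] ε, t - h' s ∈ X := by
    have : Tendsto (fun s => t - h' s) (𝓝[Icc 0 1] ε) (𝓝 x₀) := by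
      simpa [t] using (tendsto_const_nhds (x := t)).sub (hh' ε hε)
    exact this.eventually (hX.mem_nhds hx₀)
  obtain ⟨δ, hδ, hV⟩ := Metric.mem_nhdsWithin_iff.mp hnear
  have hVε : ε ∈ Metric.ball ε δ ∩ Icc 0 1 := ⟨Metric.mem_ball_self hδ, hε⟩
  have hconst : ((fun s => t + (h s - h' s)) '' (Metric.ball ε δ ∩ Icc 0 1)).Subsingleton := by
    refine IsPreconnected.subsingleton_of_forall_eq_of_ae_deriv_ne_zero hg2
      (C := deriv g (t + (h ε - h' ε)))
      (((convex_ball ε δ).inter (convex_Icc 0 1)).isPreconnected.image _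
        (continuousOn_const.add ((hh.sub hh').mono inter_subset_right))) ?_
    rintro _ ⟨s, hs, rfl⟩
    exact H.deriv_eq hX hg hε hs.2 (hV hs) (hV hVε)
  filter_upwards [inter_mem_nhdsWithin _ (Metric.ball_mem_nhds ε hδ)] with s ⟨hs, hsδ⟩
  exact add_left_cancel (hconst (mem_image_of_mem _ ⟨hsδ, hs⟩) (mem_image_of_mem _ hVε))

theorem eqOn_Icc (H : PreANMEq g h β g' h' β' X) (hX : IsOpen X) (hXne : X.Nonempty)
    (hg : Differentiable ℝ g) (hg2 : ∀ᵐ x, deriv (deriv g) x ≠ 0)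
    (hh : ContinuousOn h (Icc 0 1)) (hh' : ContinuousOn h' (Icc 0 1))
    (hh0 : h (1 / 2) = 0) (hh'0 : h' (1 / 2) = 0) : EqOn h h' (Icc 0 1) := by
  intro ε hε
  have hc := isPreconnected_Icc.induction₂' (fun a b => h a - h' a = h b - h' b)
    (fun a ha => (H.eventually_sub_eq hX hXne hg hg2 hh hh' ha).mono fun _ hb => ⟨hb.symm, hb⟩)
    (fun _ _ _ _ _ _ => Eq.trans) hε (show (1 / 2 : ℝ) ∈ Icc 0 1 by norm_num)
  rw [hh0, hh'0] at hc
  linarith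

theorem beta_eq (H : PreANMEq g h β g' h β' X) (hh0 : h (1 / 2) = 0) {x ε : ℝ} (hx : x ∈ X)
    (hε : ε ∈ Icc (0 : ℝ) 1) (hxε : x + h ε ∈ X) (hhε : h ε ≠ 0) : β = β' := by
  have h₁ := H x hx ε hε
  have h₂ := H (x + h ε) hxε (1 / 2) (by norm_num)
  rw [hh0, add_zero] at h₂
  exact mul_right_cancel₀ hhε (by linear_combination h₂ - h₁)

end PreANMEq

theorem preANM_identifiability_nonlinear_general
    (g g' h h' : ℝ → ℝ) (β β' : ℝ) (X : Set ℝ)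
    (hXopen : IsOpen X) (hXne : X.Nonempty)
    (hg2 : ContDiff ℝ 2 g)
    (hhmono : StrictMonoOn h (Icc 0 1))
    (hhdiff : ∀ ε ∈ Icc (0:ℝ) 1, DifferentiableAt ℝ h ε)
    (hh'diff : ∀ ε ∈ Icc (0:ℝ) 1, DifferentiableAt ℝ h' ε)
    (hh0 : h (1/2) = 0) (hh'0 : h' (1/2) = 0)
    (hreach : ∀ x ∈ X, ∃ ε₀ ∈ Icc (0:ℝ) 1, ε₀ ≠ 1/2 ∧ x + h ε₀ ∈ X)
    (heq : ∀ x ∈ X, ∀ ε ∈ Icc (0:ℝ) 1,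
      g (x + h ε) + β * x = g' (x + h' ε) + β' * x)
    (hnonlin : ∀ᵐ x ∂volume, deriv (deriv g) x ≠ 0) :
    β = β' ∧ (∀ ε ∈ Icc (0:ℝ) 1, h ε = h' ε) ∧
      (∀ x ∈ X, ∀ ε ∈ Icc (0:ℝ) 1, g (x + h ε) = g' (x + h ε)) := by
  have hhh' : EqOn h h' (Icc 0 1) :=
    PreANMEq.eqOn_Icc heq hXopen hXne (hg2.differentiable two_ne_zero) hnonlin
      (fun ε hε => (hhdiff ε hε).continuousAt.continuousWithinAt)
      (fun ε hε => (hh'diff ε hε).continuousAt.continuousWithinAt) hh0 hh'0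
  have heq' : PreANMEq g h β g' h β' X := fun x hx ε hε => hhh' hε ▸ heq x hx ε hε
  obtain ⟨x₀, hx₀⟩ := hXne
  obtain ⟨ε₀, hε₀, hε₀ne, hx₀ε₀⟩ := hreach x₀ hx₀
  have hhε₀ : h ε₀ ≠ 0 := hh0 ▸ hhmono.injOn.ne hε₀ (by norm_num) hε₀ne
  have hββ' : β = β' := heq'.beta_eq hh0 hx₀ hε₀ hx₀ε₀ hhε₀
  refine ⟨hββ', hhh', fun x hx ε hε => ?_⟩
  have := heq' x hx ε hε
  rw [hββ'] at this
  exact add_right_cancel this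

/-- identifiability of nonlinear pre-additive noise models. If the strictly
monotone, twice differentiable `g, g'`, the differentiable strictly monotone noise
quantile functions `h, h'` with `h(1/2) = h'(1/2) = 0` and scalars `β, β'` satisfy
`g (x + h ε) + β x = g' (x + h' ε) + β' x` on an open set `X` and all `ε ∈ [0,1]`, and
`g'' ≠ 0` almost everywhere, then `β = β'`, `h = h'` on `[0,1]`, and
`g (x + h ε) = g' (x + h ε)` for all `x ∈ X`, `ε ∈ [0,1]`. -/
theorem preANM_identifiability_nonlinear
    (g g' h h' : ℝ → ℝ) (β β' : ℝ) (X : Set ℝ)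
    (hXopen : IsOpen X) (hXne : X.Nonempty)
    (hgmono : StrictMono g) (hg'mono : StrictMono g')
    (hg2 : ContDiff ℝ 2 g) (hg'2 : ContDiff ℝ 2 g')
    (hhmono : StrictMonoOn h (Icc 0 1)) (hh'mono : StrictMonoOn h' (Icc 0 1))
    (hhdiff : ∀ ε ∈ Icc (0:ℝ) 1, DifferentiableAt ℝ h ε)
    (hh'diff : ∀ ε ∈ Icc (0:ℝ) 1, DifferentiableAt ℝ h' ε)
    (hh0 : h (1/2) = 0) (hh'0 : h' (1/2) = 0)
    (hreach : ∀ x ∈ X, ∃ ε₀ ∈ Icc (0:ℝ) 1, ε₀ ≠ 1/2 ∧ x + h ε₀ ∈ X)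
    (heq : ∀ x ∈ X, ∀ ε ∈ Icc (0:ℝ) 1,
      g (x + h ε) + β * x = g' (x + h' ε) + β' * x)
    (hnonlin : ∀ᵐ x ∂volume, deriv (deriv g) x ≠ 0) :
    β = β' ∧ (∀ ε ∈ Icc (0:ℝ) 1, h ε = h' ε) ∧
      (∀ x ∈ X, ∀ ε ∈ Icc (0:ℝ) 1, g (x + h ε) = g' (x + h ε)) :=
  preANM_identifiability_nonlinear_general g g' h h' β β' X hXopen hXne hg2 hhmono hhdiff hh'diff
    hh0 hh'0 hreach heq hnonlin
end

section
/- Identifiability in the linear case of pre-ANMs: If g(x) = αx + ς is affine, g' is differentiable, h, h' are differentiable with h(1/2) = h'(1/2) = 0, and g(x + h(ε)) + βx = g'(x + h'(ε)) + β'x holds for all x in an open interval X and all ε ∈ [0,1], then g' is affine on the relevant domain, say g'(z) = α'z + ς', with ς = ς', α + β = α' + β', and α·h(ε) = α'·h'(ε) for all ε ∈ [0,1]. -/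
open Set Topology

/-!
Solving the functional equation for `g'` shows that, for each `ε`, `g'` is affine with slope
`α' = α + β - β'` on the shifted interval `X + h' ε`, with intercept `ς + (α h ε - α' h' ε)`.
Since `h'` is continuous, the intervals for nearby `ε` overlap, so the intercept is locally
constant in `ε`, hence constant on the connected set `[0,1]`; at `ε = 1/2` it equals `ς`.
-/

theorem IsPreconnected.apply_eq_of_eventually_eq {α β : Type*} [TopologicalSpace α] {s : Set α}
    (hs : IsPreconnected s) {f : α → β} (hf : ∀ x ∈ s, ∀ᶠ y in 𝓝[s] x, f y = f x)
    {x y : α} (hx : x ∈ s) (hy : y ∈ s) : f x = f y :=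
  hs.induction₂ (fun x y => f x = f y) (fun x hx => (hf x hx).mono fun _ h => h.symm)
    (fun _ _ _ _ _ _ => Eq.trans) (fun _ _ _ _ => Eq.symm) hx hy

theorem intercept_eq_of_affineOn_shifted_Ioo {f : ℝ → ℝ} {m c d s t a b : ℝ}
    (hc : ∀ x ∈ Ioo a b, f (x + s) = m * (x + s) + c)
    (hd : ∀ x ∈ Ioo a b, f (x + t) = m * (x + t) + d)
    (hst : |s - t| < b - a) : c = d := by
  obtain ⟨hst₁, hst₂⟩ := abs_lt.1 hst
  have hzs : (a + b) / 2 + (t - s) / 2 ∈ Ioo a b := ⟨by linarith, by linarith⟩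
  have hzt : (a + b) / 2 + (s - t) / 2 ∈ Ioo a b := ⟨by linarith, by linarith⟩
  have hcz := hc _ hzs
  have hdz := hd _ hzt
  rw [show (a + b) / 2 + (s - t) / 2 + t = (a + b) / 2 + (t - s) / 2 + s by ring] at hdz
  linarith

theorem preANM_identifiability_linear_general
    (α ς β β' : ℝ) (g' h h' : ℝ → ℝ) (a b : ℝ) (hab : a < b)
    (hh'diff : ∀ ε ∈ Icc (0:ℝ) 1, DifferentiableAt ℝ h' ε)
    (hh0 : h (1/2) = 0) (hh'0 : h' (1/2) = 0)
    (heq : ∀ x ∈ Ioo a b, ∀ ε ∈ Icc (0:ℝ) 1,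
      (α * (x + h ε) + ς) + β * x = g' (x + h' ε) + β' * x) :
    ∃ α' ς' : ℝ,
      (∀ x ∈ Ioo a b, ∀ ε ∈ Icc (0:ℝ) 1, g' (x + h' ε) = α' * (x + h' ε) + ς') ∧
      ς = ς' ∧ α + β = α' + β' ∧ ∀ ε ∈ Icc (0:ℝ) 1, α * h ε = α' * h' ε := by
  set α' := α + β - β'
  set φ : ℝ → ℝ := fun ε => α * h ε - α' * h' ε
  have haffine : ∀ ε ∈ Icc (0:ℝ) 1, ∀ x ∈ Ioo a b,
      g' (x + h' ε) = α' * (x + h' ε) + (ς + φ ε) := fun ε hε x hx => by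
    linear_combination -heq x hx ε hε
  have hlocal : ∀ ε ∈ Icc (0:ℝ) 1, ∀ᶠ e in 𝓝[Icc 0 1] ε, φ e = φ ε := fun ε hε => by
    have hcont : ContinuousWithinAt h' (Icc 0 1) ε :=
      (hh'diff ε hε).continuousAt.continuousWithinAt
    filter_upwards [hcont.eventually (Metric.ball_mem_nhds _ (sub_pos.2 hab)),
      self_mem_nhdsWithin] with e he he'
    exact add_left_cancel (intercept_eq_of_affineOn_shifted_Ioo (haffine e he') (haffine ε hε) he)
  have hφ : ∀ ε ∈ Icc (0:ℝ) 1, φ ε = 0 := fun ε hε => by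
    rw [isPreconnected_Icc.apply_eq_of_eventually_eq hlocal hε (y := 1 / 2)
      ⟨by norm_num, by norm_num⟩]
    simp only [φ, hh0, hh'0, mul_zero, sub_zero]
  refine ⟨α', ς, fun x hx ε hε => ?_, rfl, (sub_add_cancel _ _).symm,
    fun ε hε => sub_eq_zero.1 (hφ ε hε)⟩
  simpa [hφ ε hε] using haffine ε hε x hx

/-- identifiability in the linear case of pre-ANMs. If `g x = α x + ς` is
affine, `g'` is differentiable, `h, h'` are differentiable with `h(1/2) = h'(1/2) = 0`,
and `g (x + h ε) + β x = g' (x + h' ε) + β' x` for all `x` in an open interval `X` and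
`ε ∈ [0,1]`, then `g'` is affine on the relevant domain, `g' z = α' z + ς'`, with
`ς = ς'`, `α + β = α' + β'`, and `α · h ε = α' · h' ε` for all `ε ∈ [0,1]`. -/
theorem preANM_identifiability_linear
    (α ς β β' : ℝ) (g' h h' : ℝ → ℝ) (a b : ℝ) (hab : a < b)
    (hg'diff : Differentiable ℝ g')
    (hhdiff : ∀ ε ∈ Icc (0:ℝ) 1, DifferentiableAt ℝ h ε)
    (hh'diff : ∀ ε ∈ Icc (0:ℝ) 1, DifferentiableAt ℝ h' ε)
    (hh0 : h (1/2) = 0) (hh'0 : h' (1/2) = 0)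
    (heq : ∀ x ∈ Ioo a b, ∀ ε ∈ Icc (0:ℝ) 1,
      (α * (x + h ε) + ς) + β * x = g' (x + h' ε) + β' * x) :
    ∃ α' ς' : ℝ,
      (∀ x ∈ Ioo a b, ∀ ε ∈ Icc (0:ℝ) 1, g' (x + h' ε) = α' * (x + h' ε) + ς') ∧
      ς = ς' ∧ α + β = α' + β' ∧ ∀ ε ∈ Icc (0:ℝ) 1, α * h ε = α' * h' ε :=
  preANM_identifiability_linear_general α ς β β' g' h h' a b hab hh'diff hh0 hh'0 heq
end

section
/- Mean extrapolation uncertainty bound for engression: Let η be a random variable supported on [−η_max, η_max] with cdf F_η, and let g, g' be differentiable with 0 < derivative ≤ L and g = g' on (−∞, x_max + η_max]. Then |E[g(x_max + δ + η)] − E[g'(x_max + δ + η)]| ≤ L ∫_{η_max − δ}^{η_max} (η − η_max + δ) dF_η(η) for every δ > 0. -/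
open Set MeasureTheory

lemma lip_of_deriv_Ioc {f : ℝ → ℝ} {L : ℝ} (hL : 0 < L) (hf : Differentiable ℝ f)
    (hd : ∀ x : ℝ, deriv f x ∈ Ioc 0 L) : LipschitzWith (Real.toNNReal L) f := by
  apply lipschitzWith_of_nnnorm_deriv_le hf
  intro x
  have h := hd x
  simp only [← NNReal.coe_le_coe, coe_nnnorm, Real.coe_toNNReal _ hL.le, Real.norm_eq_abs]
  rw [abs_of_pos h.1]
  exact h.2

/-- mean extrapolation uncertainty bound for engression. Let `μ` be the
law of a noise variable supported on `[−η_max, η_max]`, and let `g, g'` be differentiable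
with derivative in `(0, L]` agreeing on `(−∞, x_max + η_max]`. Then
`|E[g(x_max + δ + η)] − E[g'(x_max + δ + η)]|
  ≤ L ∫_{η_max − δ}^{η_max} (η − η_max + δ) dF_η(η)` for every `δ > 0`. -/
theorem mean_extrapolation_uncertainty_bound
    (L ηmax xmax δ : ℝ) (hL : 0 < L) (hηmax : 0 < ηmax) (hδ : 0 < δ)
    (μ : Measure ℝ) [IsProbabilityMeasure μ]
    (hsupp : μ (Icc (-ηmax) ηmax)ᶜ = 0)
    (g g' : ℝ → ℝ)
    (hg : Differentiable ℝ g) (hg' : Differentiable ℝ g')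
    (hgderiv : ∀ x : ℝ, deriv g x ∈ Ioc 0 L) (hg'deriv : ∀ x : ℝ, deriv g' x ∈ Ioc 0 L)
    (hagree : ∀ x ≤ xmax + ηmax, g x = g' x) :
    |(∫ t, g (xmax + δ + t) ∂μ) - ∫ t, g' (xmax + δ + t) ∂μ| ≤
      L * ∫ t in Ioc (ηmax - δ) ηmax, (t - ηmax + δ) ∂μ := by
  have hglip := lip_of_deriv_Ioc hL hg hgderiv
  have hg'lip := lip_of_deriv_Ioc hL hg' hg'deriv
  have hae : ∀ᵐ t ∂μ, t ∈ Icc (-ηmax) ηmax := by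
    rw [ae_iff]
    exact hsupp
  -- Lipschitz bound: for all x y, |f x - f y| ≤ L |x - y|
  have hlipbd : ∀ (f : ℝ → ℝ), LipschitzWith (Real.toNNReal L) f →
      ∀ x y : ℝ, |f x - f y| ≤ L * |x - y| := by
    intro f hf x y
    have := hf.dist_le_mul x y
    rwa [Real.dist_eq, Real.dist_eq, Real.coe_toNNReal _ hL.le] at this
  -- integrability of the composites
  have hint : ∀ (f : ℝ → ℝ), Continuous f → LipschitzWith (Real.toNNReal L) f →
      Integrable (fun t => f (xmax + δ + t)) μ := by
    intro f hfc hflip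
    apply Integrable.mono' (g := fun _ => |f (xmax + δ)| + L * ηmax)
      (integrable_const _)
      ((hfc.comp (by continuity)).aestronglyMeasurable)
    filter_upwards [hae] with t ht
    rw [Real.norm_eq_abs]
    have h1 : |f (xmax + δ + t) - f (xmax + δ)| ≤ L * |t| := by
      have := hlipbd f hflip (xmax + δ + t) (xmax + δ)
      simpa using this
    have h2 : |t| ≤ ηmax := abs_le.mpr ⟨ht.1, ht.2⟩
    calc |f (xmax + δ + t)| ≤ |f (xmax + δ)| + |f (xmax + δ + t) - f (xmax + δ)| := by
          have := abs_add_le (f (xmax + δ)) (f (xmax + δ + t) - f (xmax + δ))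
          simpa using this
      _ ≤ |f (xmax + δ)| + L * ηmax := by
          gcongr
          exact h1.trans (by gcongr)
  have hintg := hint g hg.continuous hglip
  have hintg' := hint g' hg'.continuous hg'lip
  -- the dominating function
  set D : ℝ → ℝ := (Ioc (ηmax - δ) ηmax).indicator (fun t => L * (t - ηmax + δ)) with hD
  have hDint : Integrable D μ := by
    apply Integrable.mono' (g := fun _ => L * δ) (integrable_const _)
    · exact (Measurable.indicator (by fun_prop) measurableSet_Ioc).aestronglyMeasurable
    · filter_upwards with t
      rw [Real.norm_eq_abs, hD]
      by_cases ht : t ∈ Ioc (ηmax - δ) ηmax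
      · rw [indicator_of_mem ht]
        rw [abs_of_nonneg (by nlinarith [ht.1, ht.2] : (0:ℝ) ≤ L * (t - ηmax + δ))]
        nlinarith [ht.1, ht.2]
      · rw [indicator_of_notMem ht]
        simp
        positivity
  -- pointwise a.e. bound
  have hptwise : ∀ᵐ t ∂μ, |g (xmax + δ + t) - g' (xmax + δ + t)| ≤ D t := by
    filter_upwards [hae] with t ht
    by_cases hcase : t ≤ ηmax - δ
    · have : xmax + δ + t ≤ xmax + ηmax := by linarith
      rw [hagree _ this, sub_self, abs_zero, hD]
      by_cases h2 : t ∈ Ioc (ηmax - δ) ηmax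
      · exact absurd hcase (not_le.mpr h2.1)
      · rw [indicator_of_notMem h2]
    · push_neg at hcase
      have htIoc : t ∈ Ioc (ηmax - δ) ηmax := ⟨hcase, ht.2⟩
      rw [hD, indicator_of_mem htIoc]
      have ha : g (xmax + ηmax) = g' (xmax + ηmax) := hagree _ le_rfl
      set h : ℝ → ℝ := fun x => g x - g' x with hh
      have hhd : Differentiable ℝ h := hg.sub hg'
      have hhlip : LipschitzWith (Real.toNNReal L) h := by
        apply lipschitzWith_of_nnnorm_deriv_le hhd
        intro x
        have hdx : deriv h x = deriv g x - deriv g' x := by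
          rw [hh]; exact deriv_sub (hg x) (hg' x)
        simp only [← NNReal.coe_le_coe, coe_nnnorm, Real.coe_toNNReal _ hL.le,
          Real.norm_eq_abs, hdx]
        have h1 := hgderiv x
        have h2 := hg'deriv x
        rw [abs_le]
        constructor <;> [linarith [h1.1, h2.2]; linarith [h1.2, h2.1]]
      have hbd := hlipbd h hhlip (xmax + δ + t) (xmax + ηmax)
      have hz : h (xmax + ηmax) = 0 := by rw [hh]; simp [ha]
      rw [hz, sub_zero] at hbd
      calc |g (xmax + δ + t) - g' (xmax + δ + t)| = |h (xmax + δ + t)| := rfl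
        _ ≤ L * |xmax + δ + t - (xmax + ηmax)| := hbd
        _ = L * (t - ηmax + δ) := by
            rw [abs_of_nonneg (by linarith)]; ring_nf
  -- combine
  calc |(∫ t, g (xmax + δ + t) ∂μ) - ∫ t, g' (xmax + δ + t) ∂μ|
      = |∫ t, (g (xmax + δ + t) - g' (xmax + δ + t)) ∂μ| := by
        rw [integral_sub hintg hintg']
    _ ≤ ∫ t, |g (xmax + δ + t) - g' (xmax + δ + t)| ∂μ := by
        simpa [Real.norm_eq_abs] using
          norm_integral_le_integral_norm (fun t => g (xmax + δ + t) - g' (xmax + δ + t)) (μ := μ)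
    _ ≤ ∫ t, D t ∂μ := by
        apply integral_mono_ae ((hintg.sub hintg').abs) hDint hptwise
    _ = ∫ t in Ioc (ηmax - δ) ηmax, L * (t - ηmax + δ) ∂μ := by
        rw [hD, integral_indicator measurableSet_Ioc]
    _ = L * ∫ t in Ioc (ηmax - δ) ηmax, (t - ηmax + δ) ∂μ := by
        rw [integral_const_mul]
end

section
/- Maximum mean extrapolability gain for symmetric noise: if η is symmetric about 0 with support [−η_max, η_max], then the gain γ(δ) = L·δ·F_η(η_max − δ) + L ∫_{η_max−δ}^{η_max} (η_max − η) dF_η(η) satisfies γ(δ) ≤ L·η_max for all δ > 0, with equality for all δ ≥ 2·η_max. -/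
/-!
Write `a = η_max − δ`. Since `η ≤ η_max` almost surely, `γ(δ)/L` is `E[η_max − η]` minus the
deficit `∫_{η ≤ a} (a − η) dF_η`, which is nonnegative. Symmetry gives `E[η] = 0`, hence
`E[η_max − η] = η_max`. For `δ ≥ 2 η_max` we have `a ≤ −η_max`, so `η ≥ a` almost surely and the
deficit vanishes.
-/

open Set MeasureTheory

noncomputable def meanExtrapolabilityGain (L c δ : ℝ) (μ : Measure ℝ) : ℝ :=
  L * δ * (μ (Iic (c - δ))).toReal + L * ∫ t in Ioc (c - δ) c, (c - t) ∂μ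

theorem integral_id_eq_zero_of_isNegInvariant {E : Type*} [NormedAddCommGroup E]
    [NormedSpace ℝ E] [MeasurableSpace E] [MeasurableNeg E] (μ : Measure E) [μ.IsNegInvariant] :
    ∫ x, x ∂μ = 0 := by
  have h := integral_neg_eq_self (fun x : E => x) μ
  rw [integral_neg] at h
  have h2 : (2 : ℝ) • ∫ x, x ∂μ = 0 := by
    rw [two_smul]; nth_rewrite 1 [← h]; exact neg_add_cancel _
  exact (smul_eq_zero.1 h2).resolve_left two_ne_zero

theorem Ioc_ae_eq_Ioi_of_measure_Ioi_eq_zero {μ : Measure ℝ} {a b : ℝ} (hb : μ (Ioi b) = 0) :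
    Ioc a b =ᵐ[μ] Ioi a := by
  refine ae_eq_set.2 ⟨by simp, measure_mono_null ?_ hb⟩
  intro x ⟨hax, hxb⟩
  exact lt_of_not_ge fun h => hxb ⟨hax, h⟩

section Deficit

variable {μ : Measure ℝ} {a : ℝ}

theorem setIntegral_Iic_sub_nonneg : 0 ≤ ∫ t in Iic a, (a - t) ∂μ :=
  setIntegral_nonneg measurableSet_Iic fun _ ht => sub_nonneg.2 ht

theorem setIntegral_Iic_sub_eq_zero (ha : μ (Iio a) = 0) : ∫ t in Iic a, (a - t) ∂μ = 0 := by
  refine setIntegral_eq_zero_of_ae_eq_zero ?_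
  filter_upwards [measure_eq_zero_iff_ae_notMem.1 ha] with t hta hat
  exact sub_eq_zero.2 (le_antisymm (not_lt.1 hta) hat)

end Deficit

theorem meanExtrapolabilityGain_eq (L c δ : ℝ) {μ : Measure ℝ} [IsFiniteMeasure μ]
    (hc : μ (Ioi c) = 0) (hint : Integrable (fun t => t) μ) :
    meanExtrapolabilityGain L c δ μ =
      L * ∫ t, (c - t) ∂μ - L * ∫ t in Iic (c - δ), (c - δ - t) ∂μ := by
  have hf : Integrable (fun t => c - t) μ := (integrable_const c).sub hint
  have hsplit := integral_add_compl (measurableSet_Iic (a := c - δ)) hf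
  rw [compl_Iic, ← setIntegral_congr_set (Ioc_ae_eq_Ioi_of_measure_Ioi_eq_zero hc)] at hsplit
  have hlow : ∫ t in Iic (c - δ), (c - t) ∂μ =
      δ * (μ (Iic (c - δ))).toReal + ∫ t in Iic (c - δ), (c - δ - t) ∂μ := by
    have hg : Integrable (fun t => c - δ - t) μ := (integrable_const _).sub hint
    calc ∫ t in Iic (c - δ), (c - t) ∂μ = ∫ t in Iic (c - δ), (δ + (c - δ - t)) ∂μ := by
          congr 1 with t; ring
      _ = δ * (μ (Iic (c - δ))).toReal + ∫ t in Iic (c - δ), (c - δ - t) ∂μ := by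
          rw [integral_add (integrable_const _).integrableOn hg.integrableOn, setIntegral_const,
            smul_eq_mul, measureReal_def, mul_comm]
  unfold meanExtrapolabilityGain
  linear_combination L * hsplit - L * hlow

theorem mean_extrapolability_gain_max_general
    (L ηmax δ : ℝ) (hL : 0 < L)
    (μ : Measure ℝ) [IsProbabilityMeasure μ]
    (hsupp : μ (Icc (-ηmax) ηmax)ᶜ = 0)
    (hsym : μ.map (fun t => -t) = μ) :
    (L * δ * (μ (Iic (ηmax - δ))).toReal
        + L * ∫ t in Ioc (ηmax - δ) ηmax, (ηmax - t) ∂μ ≤ L * ηmax) ∧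
    (2 * ηmax ≤ δ →
      L * δ * (μ (Iic (ηmax - δ))).toReal
        + L * ∫ t in Ioc (ηmax - δ) ηmax, (ηmax - t) ∂μ = L * ηmax) := by
  change meanExtrapolabilityGain L ηmax δ μ ≤ L * ηmax ∧
    (2 * ηmax ≤ δ → meanExtrapolabilityGain L ηmax δ μ = L * ηmax)
  have : μ.IsNegInvariant := ⟨hsym⟩
  have hint : Integrable (fun t => t) μ :=
    .of_mem_Icc (-ηmax) ηmax aemeasurable_id (mem_ae_iff.2 hsupp)
  have hmean : ∫ t, (ηmax - t) ∂μ = ηmax := by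
    rw [integral_sub (integrable_const _) hint, integral_const,
      integral_id_eq_zero_of_isNegInvariant μ]
    simp
  have hIoi : μ (Ioi ηmax) = 0 :=
    measure_mono_null (by rw [← compl_Iic]; exact compl_subset_compl.2 Icc_subset_Iic_self) hsupp
  have hIio : μ (Iio (-ηmax)) = 0 :=
    measure_mono_null (by rw [← compl_Ici]; exact compl_subset_compl.2 Icc_subset_Ici_self) hsupp
  rw [meanExtrapolabilityGain_eq L ηmax δ hIoi hint, hmean]
  refine ⟨?_, fun hδ => ?_⟩
  · linarith [mul_nonneg hL.le (setIntegral_Iic_sub_nonneg (μ := μ) (a := ηmax - δ))]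
  · rw [setIntegral_Iic_sub_eq_zero (measure_mono_null (Iio_subset_Iio (by linarith)) hIio)]
    ring

/-- maximum mean extrapolability gain for symmetric noise. If the
(continuous) law `μ` of the noise is symmetric about `0` with support `[−η_max, η_max]`,
then `γ(δ) = L·δ·F_η(η_max − δ) + L ∫_{η_max−δ}^{η_max} (η_max − η) dF_η(η)` satisfies
`γ(δ) ≤ L·η_max` for all `δ > 0`, with equality for all `δ ≥ 2·η_max`. -/
theorem mean_extrapolability_gain_max
    (L ηmax δ : ℝ) (hL : 0 < L) (hηmax : 0 < ηmax) (hδ : 0 < δ)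
    (μ : Measure ℝ) [IsProbabilityMeasure μ]
    (hsupp : μ (Icc (-ηmax) ηmax)ᶜ = 0)
    (hcont : ∀ t : ℝ, μ {t} = 0)
    (hsym : μ.map (fun t => -t) = μ) :
    (L * δ * (μ (Iic (ηmax - δ))).toReal
        + L * ∫ t in Ioc (ηmax - δ) ηmax, (ηmax - t) ∂μ ≤ L * ηmax) ∧
    (2 * ηmax ≤ δ →
      L * δ * (μ (Iic (ηmax - δ))).toReal
        + L * ∫ t in Ioc (ηmax - δ) ηmax, (ηmax - t) ∂μ = L * ηmax) :=
  mean_extrapolability_gain_max_general L ηmax δ hL μ hsupp hsym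
end

section
/- Wasserstein-ℓ extrapolation uncertainty formula for engression (upper bound): Let g, g' be differentiable with derivative in (0, L], agreeing on (−∞, x_max + η_max], let η have continuous cdf F_η with support [−η_max, η_max] and quantile function Q, and let P_x, P'_x denote the laws of g(x + η) + βx and g'(x + η) + βx. Then for δ > 0 and ℓ ≥ 1, W_ℓ(P_{x_max+δ}, P'_{x_max+δ}) ≤ L·(∫_{η_max−δ}^{η_max} (η − η_max + δ)^ℓ dF_η(η))^{1/ℓ}. -/
open Set MeasureTheory

/-- α-quantile of a distribution `ν` on `ℝ`. -/
noncomputable def quantileOf (ν : Measure ℝ) (α : ℝ) : ℝ :=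
  sInf {y : ℝ | α ≤ (ν (Iic y)).toReal}

/-- Wasserstein-ℓ distance on `ℝ` via the one-dimensional quantile formula:
`W_ℓ(P,P') = (∫₀¹ |Q_α(P) − Q_α(P')|^ℓ dα)^(1/ℓ)`. -/
noncomputable def wassersteinL (ℓ : ℝ) (P P' : Measure ℝ) : ℝ :=
  (∫ α in Ioo (0:ℝ) 1, |quantileOf P α - quantileOf P' α| ^ ℓ) ^ (1 / ℓ)

/-!
For a strictly increasing continuous `f`, the `α`-quantile of the law of `f(η)` is
`f(Q_α(η))`. Hence both laws at `x = x_max + δ` have quantiles `g(x + Q_α) + βx` and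
`g'(x + Q_α) + βx`, driven by the same noise quantile. Their difference vanishes when
`x + Q_α ≤ x_max + η_max`, where `g = g'`, and is otherwise at most
`L · (Q_α − η_max + δ)` by the mean value theorem, since `|(g − g')'| ≤ L`. Finally `α ↦ Q_α`
pushes the uniform law on `(0, 1)` forward to the law of `η`, which turns the `dα`-integral
into a `dF_η`-integral.
-/

open Filter Topology ProbabilityTheory

section Quantile

variable {μ : Measure ℝ} [IsProbabilityMeasure μ] {α : ℝ}

lemma quantileOf_eq_sInf_cdf : quantileOf μ α = sInf {y | α ≤ cdf μ y} := by
  simp only [quantileOf, cdf_eq_real, measureReal_def]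

lemma quantileOf_le_iff (hα : α ∈ Ioo 0 1) (s : ℝ) : quantileOf μ α ≤ s ↔ α ≤ cdf μ s := by
  rw [quantileOf_eq_sInf_cdf]
  set S := {y | α ≤ cdf μ y}
  have hup : ∀ y ∈ S, ∀ z, y ≤ z → z ∈ S := fun y hy z hyz => hy.trans (monotone_cdf μ hyz)
  have hne : S.Nonempty :=
    ((tendsto_cdf_atTop μ).eventually (lt_mem_nhds hα.2)).exists.imp fun _ h => h.le
  have hbdd : BddBelow S := by
    obtain ⟨b, hb⟩ := eventually_atBot.1 ((tendsto_cdf_atBot μ).eventually (gt_mem_nhds hα.1))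
    refine ⟨b, fun y hy => le_of_not_gt fun hyb => ?_⟩
    exact (hb y hyb.le).not_ge hy
  -- `cdf μ` is right-continuous, so the infimum of `S` belongs to `S`.
  have hmem : sInf S ∈ S := by
    refine ge_of_tendsto (((cdf μ).right_continuous _).tendsto.mono_left
      (nhdsWithin_mono _ Ioi_subset_Ici_self)) (eventually_nhdsWithin_of_forall fun y hy => ?_)
    obtain ⟨z, hz, hzy⟩ := exists_lt_of_csInf_lt hne hy
    exact hup z hz y hzy.le
  exact ⟨fun h => hup _ hmem s h, fun h => csInf_le hbdd h⟩

lemma monotoneOn_quantileOf : MonotoneOn (quantileOf μ) (Ioo 0 1) := fun _ ha _ hb hab =>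
  (quantileOf_le_iff ha _).2 (hab.trans ((quantileOf_le_iff hb _).1 le_rfl))

lemma aemeasurable_quantileOf : AEMeasurable (quantileOf μ) (volume.restrict (Ioo 0 1)) :=
  aemeasurable_restrict_of_monotoneOn measurableSet_Ioo monotoneOn_quantileOf

lemma map_quantileOf_volume_Ioo : (volume.restrict (Ioo 0 1)).map (quantileOf μ) = μ := by
  refine (Measure.ext_of_Iic _ _ fun s => ?_).symm
  rw [Measure.map_apply_of_aemeasurable aemeasurable_quantileOf measurableSet_Iic,
    Measure.restrict_apply' measurableSet_Ioo]
  have hpre : quantileOf μ ⁻¹' Iic s ∩ Ioo 0 1 = Ioo 0 1 ∩ Iic (cdf μ s) := by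
    ext α
    simp only [mem_inter_iff, mem_preimage, mem_Iic]
    exact ⟨fun h => ⟨h.2, (quantileOf_le_iff h.2 s).1 h.1⟩,
      fun h => ⟨(quantileOf_le_iff h.1 s).2 h.2, h.1⟩⟩
  rw [hpre, measure_congr ((Ioo_ae_eq_Ioc (μ := volume) (a := (0 : ℝ)) (b := 1)).inter
      (ae_eq_refl (Iic (cdf μ s)))), Ioc_inter_Iic,
    min_eq_right (cdf_le_one μ s), Real.volume_Ioc, sub_zero, ofReal_cdf]

lemma integral_comp_quantileOf {E : Type*} [NormedAddCommGroup E] [NormedSpace ℝ E]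
    {φ : ℝ → E} (hφ : AEStronglyMeasurable φ μ) :
    ∫ α in Ioo 0 1, φ (quantileOf μ α) = ∫ x, φ x ∂μ := by
  rw [← integral_map aemeasurable_quantileOf (by rwa [map_quantileOf_volume_Ioo]),
    map_quantileOf_volume_Ioo]

lemma integrable_comp_quantileOf {E : Type*} [NormedAddCommGroup E] {φ : ℝ → E}
    (hφ : Integrable φ μ) :
    Integrable (fun α => φ (quantileOf μ α)) (volume.restrict (Ioo 0 1)) := by
  rw [← map_quantileOf_volume_Ioo (μ := μ)] at hφ
  exact (integrable_map_measure hφ.aestronglyMeasurable aemeasurable_quantileOf).1 hφ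

lemma quantileOf_map {f : ℝ → ℝ} (hf : StrictMono f) (hfc : Continuous f) (hα : α ∈ Ioo 0 1) :
    quantileOf (μ.map f) α = f (quantileOf μ α) := by
  have := Measure.isProbabilityMeasure_map (μ := μ) hfc.measurable.aemeasurable
  have hcdf : ∀ y, cdf (μ.map f) y = μ.real (f ⁻¹' Iic y) := fun y => by
    rw [cdf_eq_real, map_measureReal_apply hfc.measurable measurableSet_Iic]
  set q := quantileOf μ α
  refine le_antisymm ((quantileOf_le_iff hα _).2 ?_) (le_of_not_gt fun hlt => ?_)
  · have hpre : f ⁻¹' Iic (f q) = Iic q := by ext; simp [hf.le_iff_le]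
    rw [hcdf, hpre, ← cdf_eq_real]
    exact (quantileOf_le_iff hα q).1 le_rfl
  -- Continuity of `f` at `q` gives `t < q` whose image already exceeds the smaller quantile.
  · obtain ⟨t, htq, hft⟩ := ((hfc.tendsto q).eventually (lt_mem_nhds hlt)).exists_lt
    have hpre : f ⁻¹' Iic (quantileOf (μ.map f) α) ⊆ Iic t := fun x hx =>
      (hf.lt_iff_lt.1 ((mem_Iic.1 hx).trans_lt hft)).le
    have hαt : α ≤ cdf μ t := by
      refine ((quantileOf_le_iff (μ := μ.map f) hα _).1 le_rfl).trans ?_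
      rw [hcdf, cdf_eq_real]
      exact measureReal_mono hpre
    exact htq.not_ge ((quantileOf_le_iff hα t).2 hαt)

lemma quantileOf_map_comp_const_add_add_const {h : ℝ → ℝ} (hh : Differentiable ℝ h)
    (hpos : ∀ x, 0 < deriv h x) (x c : ℝ) (hα : α ∈ Ioo 0 1) :
    quantileOf (μ.map fun t => h (x + t) + c) α = h (x + quantileOf μ α) + c :=
  quantileOf_map (((strictMono_of_deriv_pos hpos).comp (strictMono_id.const_add x)).add_const c)
    ((hh.continuous.comp (continuous_const_add x)).add continuous_const) hα

end Quantile

lemma Continuous.integrable_of_ae_mem_Icc {μ : Measure ℝ} [IsFiniteMeasure μ] {f : ℝ → ℝ}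
    (hf : Continuous f) {a b : ℝ} (hμ : ∀ᵐ t ∂μ, t ∈ Icc a b) : Integrable f μ := by
  simpa only [IntegrableOn, Measure.restrict_eq_self_of_ae_mem hμ] using
    hf.integrableOn_Icc (μ := μ) (a := a) (b := b)

lemma wassersteinL_le_of_abs_sub_quantileOf_le {ℓ : ℝ} (hℓ : 0 < ℓ) {P P' μ : Measure ℝ}
    [IsProbabilityMeasure μ] {ψ : ℝ → ℝ} (hψ : Integrable (fun t => ψ t ^ ℓ) μ)
    (h : ∀ α ∈ Ioo 0 1, |quantileOf P α - quantileOf P' α| ≤ ψ (quantileOf μ α)) :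
    wassersteinL ℓ P P' ≤ (∫ t, ψ t ^ ℓ ∂μ) ^ (1 / ℓ) := by
  rw [wassersteinL, ← integral_comp_quantileOf hψ.aestronglyMeasurable]
  refine Real.rpow_le_rpow (integral_nonneg fun α => Real.rpow_nonneg (abs_nonneg _) _)
    (integral_mono_of_nonneg (ae_of_all _ fun α => Real.rpow_nonneg (abs_nonneg _) _)
      (integrable_comp_quantileOf hψ) ?_) (by positivity)
  exact ae_restrict_of_forall_mem measurableSet_Ioo fun α hα =>
    Real.rpow_le_rpow (abs_nonneg _) (h α hα) hℓ.le

lemma abs_sub_le_mul_max_of_eqOn_Iic {g g' : ℝ → ℝ} {L a : ℝ} (hg : Differentiable ℝ g)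
    (hg' : Differentiable ℝ g') (hderiv : ∀ x, |deriv g x - deriv g' x| ≤ L)
    (hagree : ∀ x ≤ a, g x = g' x) (x : ℝ) :
    |g x - g' x| ≤ L * max (x - a) 0 := by
  rcases le_or_gt x a with hxa | hax
  · rw [hagree x hxa, sub_self, abs_zero]
    exact mul_nonneg ((abs_nonneg _).trans (hderiv 0)) (le_max_right _ _)
  · have hmvt := convex_univ.norm_image_sub_le_of_norm_deriv_le (f := g - g') (x := a) (y := x)
      (fun t _ => (hg.sub hg') t) (fun t _ => by rw [deriv_sub (hg t) (hg' t)]; exact hderiv t)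
      trivial trivial
    simp only [Pi.sub_apply, hagree a le_rfl, sub_self, sub_zero, Real.norm_eq_abs] at hmvt
    rwa [max_eq_left (sub_pos.2 hax).le, ← abs_of_pos (sub_pos.2 hax)]

lemma integral_max_sub_rpow_eq_setIntegral_Ioc {μ : Measure ℝ} {a b ℓ : ℝ} (hℓ : ℓ ≠ 0)
    (hb : ∀ᵐ t ∂μ, t ≤ b) :
    ∫ t, max (t - a) 0 ^ ℓ ∂μ = ∫ t in Ioc a b, (t - a) ^ ℓ ∂μ := by
  rw [← setIntegral_eq_integral_of_ae_compl_eq_zero (s := Ioc a b)]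
  · exact setIntegral_congr_fun measurableSet_Ioc fun t ht => by
      rw [max_eq_left (sub_pos.2 ht.1).le]
  · filter_upwards [hb] with t htb ht
    have hta : t ≤ a := le_of_not_gt fun hat => ht ⟨hat, htb⟩
    rw [max_eq_right (sub_nonpos.2 hta), Real.zero_rpow hℓ]

theorem engression_wassersteinL_bound_general
    (L ηmax xmax δ ℓ β : ℝ) (hℓ : 1 ≤ ℓ)
    (μ : Measure ℝ) [IsProbabilityMeasure μ]
    (hsupp : μ (Icc (-ηmax) ηmax)ᶜ = 0)
    (g g' : ℝ → ℝ)
    (hg : Differentiable ℝ g) (hg' : Differentiable ℝ g')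
    (hgderiv : ∀ x : ℝ, deriv g x ∈ Ioc 0 L) (hg'deriv : ∀ x : ℝ, deriv g' x ∈ Ioc 0 L)
    (hagree : ∀ x ≤ xmax + ηmax, g x = g' x) :
    wassersteinL ℓ
        (μ.map (fun t => g (xmax + δ + t) + β * (xmax + δ)))
        (μ.map (fun t => g' (xmax + δ + t) + β * (xmax + δ))) ≤
      L * (∫ t in Ioc (ηmax - δ) ηmax, (t - ηmax + δ) ^ ℓ ∂μ) ^ (1 / ℓ) := by
  have hℓ0 : 0 < ℓ := by linarith
  have hL : 0 ≤ L := (hgderiv 0).1.le.trans (hgderiv 0).2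
  have hsupp' : ∀ᵐ t ∂μ, t ∈ Icc (-ηmax) ηmax := hsupp
  have hderiv : ∀ x, |deriv g x - deriv g' x| ≤ L := fun x => by
    obtain ⟨⟨h₀, h₁⟩, h₀', h₁'⟩ := And.intro (hgderiv x) (hg'deriv x)
    exact abs_sub_le_iff.2 ⟨by linarith, by linarith⟩
  set ψ : ℝ → ℝ := fun t => L * max (t - (ηmax - δ)) 0
  have hψ : Integrable (fun t => ψ t ^ ℓ) μ :=
    ((by fun_prop : Continuous ψ).rpow_const fun _ => Or.inr hℓ0.le).integrable_of_ae_mem_Icc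
      hsupp'
  have hbound : ∀ α ∈ Ioo 0 1, |quantileOf (μ.map fun t => g (xmax + δ + t) + β * (xmax + δ)) α -
      quantileOf (μ.map fun t => g' (xmax + δ + t) + β * (xmax + δ)) α| ≤ ψ (quantileOf μ α) := by
    intro α hα
    rw [quantileOf_map_comp_const_add_add_const hg (fun x => (hgderiv x).1) _ _ hα,
      quantileOf_map_comp_const_add_add_const hg' (fun x => (hg'deriv x).1) _ _ hα,
      add_sub_add_right_eq_sub]
    convert abs_sub_le_mul_max_of_eqOn_Iic hg hg' hderiv hagree _ using 3
    ring
  calc _ ≤ (∫ t, ψ t ^ ℓ ∂μ) ^ (1 / ℓ) :=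
        wassersteinL_le_of_abs_sub_quantileOf_le hℓ0 hψ hbound
    _ = L * (∫ t, max (t - (ηmax - δ)) 0 ^ ℓ ∂μ) ^ (1 / ℓ) := by
        simp only [ψ, Real.mul_rpow hL (le_max_right _ _), integral_const_mul]
        rw [Real.mul_rpow (by positivity) (integral_nonneg fun t => by positivity), one_div,
          Real.rpow_rpow_inv hL hℓ0.ne']
    _ = _ := by
        rw [integral_max_sub_rpow_eq_setIntegral_Ioc hℓ0.ne' (hsupp'.mono fun t ht => ht.2)]
        simp only [sub_add]

/-- Wasserstein-ℓ extrapolation uncertainty upper bound for engression.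
If `g, g'` are differentiable with derivative in `(0, L]`, agreeing on
`(−∞, x_max + η_max]`, and the noise law `μ` is continuous with support
`[−η_max, η_max]`, then for the conditional laws `P_x` of `g (x + η) + β x` and `P'_x`
of `g' (x + η) + β x`, for all `δ > 0` and `ℓ ≥ 1`,
`W_ℓ(P_{x_max+δ}, P'_{x_max+δ}) ≤ L·(∫_{η_max−δ}^{η_max} (η − η_max + δ)^ℓ dF_η)^{1/ℓ}`. -/
theorem engression_wassersteinL_bound
    (L ηmax xmax δ ℓ β : ℝ) (hL : 0 < L) (hηmax : 0 < ηmax) (hδ : 0 < δ) (hℓ : 1 ≤ ℓ)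
    (μ : Measure ℝ) [IsProbabilityMeasure μ]
    (hsupp : μ (Icc (-ηmax) ηmax)ᶜ = 0)
    (hcont : ∀ t : ℝ, μ {t} = 0)
    (g g' : ℝ → ℝ)
    (hg : Differentiable ℝ g) (hg' : Differentiable ℝ g')
    (hgderiv : ∀ x : ℝ, deriv g x ∈ Ioc 0 L) (hg'deriv : ∀ x : ℝ, deriv g' x ∈ Ioc 0 L)
    (hagree : ∀ x ≤ xmax + ηmax, g x = g' x) :
    wassersteinL ℓ
        (μ.map (fun t => g (xmax + δ + t) + β * (xmax + δ)))
        (μ.map (fun t => g' (xmax + δ + t) + β * (xmax + δ))) ≤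
      L * (∫ t in Ioc (ηmax - δ) ηmax, (t - ηmax + δ) ^ ℓ ∂μ) ^ (1 / ℓ) :=
  engression_wassersteinL_bound_general L ηmax xmax δ ℓ β hℓ μ hsupp g g' hg hg' hgderiv hg'deriv
    hagree
end
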